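/- Let $r, n$ be positive integers with $n \nmid r$, $k = r/n$, and let $f_i(x_1,\dots,x_n) = \mathrm{Res}_\infty [(z-x_1)\cdots(z-x_n)]^{r/n} \frac{dz}{z-x_i}$. Fix $x_1,\dots,x_n \in \mathbb{C}$ taking distinct values $y_1,\dots,y_p$ with multiplicities $m_1,\dots,m_p$. Then $f_i(x_1,\dots,x_n) = 0$ for all $i$ if and only if $\mathrm{Res}_\infty \prod_{j=1}^p (z - y_j)^{m_j \frac{r}{n} - 1} z^i\, dz = 0$ for all $i = 0, \dots, p-1$. -/

import Mathlib

noncomputable def gbinom (μ : ℂ) (m : ℕ) : ℂ :=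
  (∏ i ∈ Finset.range m, (μ - i)) / (m.factorial : ℂ)

/-- Expansion of `(1 - y/z)^μ` as a power series in `X = 1/z`. -/
noncomputable def binSeries (μ y : ℂ) : PowerSeries ℂ :=
  PowerSeries.mk fun m => (-1) ^ m * gbinom μ m * y ^ m

/-- Expansion of `1/(1 - y/z)` as a power series in `X = 1/z`. -/
noncomputable def invSeries (y : ℂ) : PowerSeries ℂ :=
  PowerSeries.mk fun m => y ^ m

/-- `Res_∞ f dz = -c_{-1}(f)`, in the variable `X = 1/z`. -/
noncomputable def resInf (f : LaurentSeries ℂ) : ℂ := - f.coeff 1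

/-- `f_i(x_1,…,x_n) = Res_∞ [(z-x_1)⋯(z-x_n)]^{r/n} dz/(z-x_i)`, via the formal
expansion `z^{r-1} (1 - x_i/z)^{-1} ∏_j (1 - x_j/z)^{r/n}` at infinity. -/
noncomputable def dunklSingular (r n : ℕ) (x : Fin n → ℂ) (i : Fin n) : ℂ :=
  resInf ((HahnSeries.single (-((r : ℤ) - 1)) (1 : ℂ)) *
    ((invSeries (x i) * ∏ j, binSeries ((r : ℂ) / (n : ℂ)) (x j)
      : PowerSeries ℂ) : LaurentSeries ℂ))

/-- `Res_∞ ∏_{j=1}^p (z-y_j)^{m_j r/n - 1} z^i dz`, via the expansion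
`z^{r-p+i} ∏_j (1 - y_j/z)^{m_j r/n - 1}` at infinity. -/
noncomputable def resCondition (r n p : ℕ) (y : Fin p → ℂ) (m : Fin p → ℕ) (i : ℕ) : ℂ :=
  resInf ((HahnSeries.single (-((r : ℤ) - (p : ℤ) + (i : ℤ))) (1 : ℂ)) *
    ((∏ j, binSeries ((m j : ℂ) * (r : ℂ) / (n : ℂ) - 1) (y j)
      : PowerSeries ℂ) : LaurentSeries ℂ))

/-! ### Auxiliary lemmas -/

open Polynomial Finset

lemma dp_smeval (μ : ℂ) (m : ℕ) :
    (descPochhammer ℤ m).smeval μ = ∏ i ∈ Finset.range m, (μ - i) := by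
  induction m with
  | zero => simp [descPochhammer_zero, smeval_one]
  | succ m ih =>
    rw [descPochhammer_succ_right, smeval_mul, ih, Finset.prod_range_succ]
    congr 1
    simp [smeval_sub, smeval_X, smeval_natCast]

lemma gbinom_eq (μ : ℂ) (m : ℕ) :
    gbinom μ m = (descPochhammer ℤ m).smeval μ / m.factorial := by
  rw [dp_smeval]; rfl

lemma gbinom_add (μ ν : ℂ) (k : ℕ) :
    gbinom (μ + ν) k = ∑ ij ∈ antidiagonal k, gbinom μ ij.1 * gbinom ν ij.2 := by
  rw [gbinom_eq, Ring.descPochhammer_smeval_add k (Commute.all μ ν), Finset.sum_div]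
  refine Finset.sum_congr rfl fun ij hij => ?_
  rw [Finset.HasAntidiagonal.mem_antidiagonal] at hij
  rw [gbinom_eq, gbinom_eq, div_mul_div_comm]
  rw [div_eq_div_iff (by exact_mod_cast Nat.factorial_ne_zero k) (by exact_mod_cast mul_ne_zero (Nat.cast_ne_zero.mpr ij.1.factorial_ne_zero) (Nat.cast_ne_zero.mpr ij.2.factorial_ne_zero))]
  have : (k.choose ij.1 : ℂ) * (ij.1.factorial * ij.2.factorial) = k.factorial := by
    rw [← hij, Nat.choose_symm_add, ← mul_assoc]
    exact_mod_cast congrArg (Nat.cast (R := ℂ)) (Nat.add_choose_mul_factorial_mul_factorial ij.1 ij.2)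
  calc (k.choose ij.1 : ℂ) * ((descPochhammer ℤ ij.1).smeval μ * (descPochhammer ℤ ij.2).smeval ν) * (↑ij.1.factorial * ↑ij.2.factorial)
      = ((descPochhammer ℤ ij.1).smeval μ * (descPochhammer ℤ ij.2).smeval ν) * ((k.choose ij.1 : ℂ) * (ij.1.factorial * ij.2.factorial)) := by ring
    _ = _ := by rw [this]

lemma gbinom_zero_left (m : ℕ) : gbinom 0 m = if m = 0 then 1 else 0 := by
  cases m with
  | zero => simp [gbinom]
  | succ m =>
    simp only [gbinom, Nat.succ_ne_zero, if_false]
    rw [Finset.prod_eq_zero (Finset.mem_range.mpr (Nat.succ_pos m))] <;> simp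

lemma binSeries_mul (μ ν y : ℂ) :
    binSeries μ y * binSeries ν y = binSeries (μ + ν) y := by
  ext k
  rw [PowerSeries.coeff_mul]
  simp only [binSeries, PowerSeries.coeff_mk]
  rw [gbinom_add, Finset.mul_sum, Finset.sum_mul]
  refine Finset.sum_congr rfl fun ij hij => ?_
  rw [Finset.HasAntidiagonal.mem_antidiagonal] at hij
  rw [← hij, pow_add, pow_add]
  ring

lemma binSeries_zero (y : ℂ) : binSeries 0 y = 1 := by
  ext k
  simp only [binSeries, PowerSeries.coeff_mk, gbinom_zero_left, PowerSeries.coeff_one]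
  split <;> simp_all

lemma invSeries_eq (y : ℂ) : invSeries y = binSeries (-1) y := by
  ext k
  simp only [invSeries, binSeries, PowerSeries.coeff_mk]
  have h : gbinom (-1) k = (-1)^k := by
    rw [gbinom]
    have h2 : ∏ i ∈ Finset.range k, ((-1 : ℂ) - i) = (-1)^k * k.factorial := by
      induction k with
      | zero => simp
      | succ k ih =>
        rw [Finset.prod_range_succ, ih, Nat.factorial_succ]
        push_cast; ring
    rw [h2, mul_div_assoc, div_self (Nat.cast_ne_zero.mpr k.factorial_ne_zero), mul_one]
  rw [h]
  rw [← mul_pow, ← mul_pow]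
  ring_nf

lemma binSeries_pow (μ y : ℂ) (m : ℕ) : binSeries μ y ^ m = binSeries (m * μ) y := by
  induction m with
  | zero => simp [binSeries_zero]
  | succ m ih =>
    rw [pow_succ, ih, binSeries_mul]
    norm_num
    ring_nf

lemma binSeries_one (y : ℂ) :
    binSeries 1 y = (1 : PowerSeries ℂ) - PowerSeries.C y * PowerSeries.X := by
  ext k
  simp only [binSeries, PowerSeries.coeff_mk, map_sub, PowerSeries.coeff_one]
  match k with
  | 0 => simp [gbinom]
  | 1 => simp [gbinom]
  | (j+2) =>
    have hg : gbinom 1 (j+2) = 0 := by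
      rw [gbinom]
      rw [Finset.prod_eq_zero (Finset.mem_range.mpr (show 1 < j + 2 by omega))] <;> simp
    rw [hg]
    have : (PowerSeries.coeff (j+2)) (PowerSeries.C y * PowerSeries.X) = 0 := by
      simp [PowerSeries.coeff_C_mul, PowerSeries.coeff_X]
    rw [this]
    norm_num

lemma lcoeff_sum (s : Finset ℕ) (f : ℕ → LaurentSeries ℂ) (q : ℤ) :
    (Finset.sum s f).coeff q = ∑ t ∈ s, (f t).coeff q := by
  classical
  induction s using Finset.induction_on with
  | empty => simp
  | insert _ _ h ih => simp [Finset.sum_insert h, HahnSeries.coeff_add, ih]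

lemma resInf_single_mul (S : PowerSeries ℂ) (a : ℤ) :
    resInf (HahnSeries.single (-a) (1:ℂ) * (S : LaurentSeries ℂ))
      = - ((S : LaurentSeries ℂ)).coeff (1 + a) := by
  unfold resInf
  congr 1
  have h : (HahnSeries.single (-a) (1:ℂ) * (S : LaurentSeries ℂ)).coeff ((1 + a) + (-a))
      = 1 * ((S : LaurentSeries ℂ)).coeff (1 + a) := HahnSeries.coeff_single_mul_add
  rw [show (1 + a) + (-a) = 1 by ring] at h
  rw [h, one_mul]

lemma key_mono (c : ℂ) (t : ℕ) (S : PowerSeries ℂ) (q : ℤ) :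
    (((PowerSeries.monomial t c) * S : PowerSeries ℂ) : LaurentSeries ℂ).coeff q
      = c * ((S : LaurentSeries ℂ)).coeff (q - t) := by
  have hmono : (PowerSeries.monomial t c) = PowerSeries.C c * PowerSeries.X ^ t := by
    rw [PowerSeries.X_pow_eq]
    ext k
    simp [PowerSeries.coeff_monomial]
  show ((HahnSeries.ofPowerSeries ℤ ℂ) _).coeff q = _
  rw [hmono, map_mul, map_mul, HahnSeries.ofPowerSeries_C, HahnSeries.ofPowerSeries_X_pow]
  rw [HahnSeries.C_apply, mul_assoc]
  have h1 : ((HahnSeries.single (0:ℤ)) c *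
        ((HahnSeries.single (t:ℤ)) 1 * (HahnSeries.ofPowerSeries ℤ ℂ) S)).coeff (q + 0)
      = c * (((HahnSeries.single (t:ℤ)) 1 * (HahnSeries.ofPowerSeries ℤ ℂ) S)).coeff q :=
    HahnSeries.coeff_single_mul_add
  rw [add_zero] at h1
  rw [h1]
  have h2 : (((HahnSeries.single (t:ℤ)) 1 * (HahnSeries.ofPowerSeries ℤ ℂ) S)).coeff ((q - t) + t)
      = 1 * ((HahnSeries.ofPowerSeries ℤ ℂ) S).coeff (q - t) := HahnSeries.coeff_single_mul_add
  rw [show (q - (t:ℤ)) + t = q by ring] at h2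
  rw [h2, one_mul]

lemma coe_poly_mul_lcoeff (Q : Polynomial ℂ) (pb : ℕ) (hQ : Q.natDegree < pb)
    (S : PowerSeries ℂ) (q : ℤ) :
    (((Q : PowerSeries ℂ) * S : PowerSeries ℂ) : LaurentSeries ℂ).coeff q
      = ∑ t ∈ Finset.range pb, Q.coeff t * ((S : LaurentSeries ℂ)).coeff (q - t) := by
  have hrep : (Q : PowerSeries ℂ)
      = ∑ t ∈ Finset.range pb, PowerSeries.monomial t (Q.coeff t) := by
    conv_lhs => rw [Polynomial.as_sum_range' Q pb hQ]
    rw [← Polynomial.coeToPowerSeries.ringHom_apply, map_sum]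
    refine Finset.sum_congr rfl fun t _ => ?_
    rw [Polynomial.coeToPowerSeries.ringHom_apply, Polynomial.coe_monomial]
  rw [hrep, Finset.sum_mul]
  show ((HahnSeries.ofPowerSeries ℤ ℂ) _).coeff q = _
  rw [map_sum, lcoeff_sum]
  refine Finset.sum_congr rfl fun t _ => ?_
  exact key_mono (Q.coeff t) t S q

lemma reflect_one_sub (a : ℂ) : Polynomial.reflect 1 (X - C a) = 1 - C a * X := by
  ext i
  rw [coeff_reflect]
  match i with
  | 0 =>
    rw [revAt_le (by norm_num)]
    simp
  | 1 =>
    rw [revAt_le (by norm_num)]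
    simp [Polynomial.coeff_one]
  | (k+2) =>
    have h1 : revAt 1 (k+2) = k+2 := revAt_eq_self_of_lt (by omega)
    rw [h1]
    simp only [coeff_sub, coeff_X, coeff_C, coeff_one, coeff_C_mul]
    norm_num

lemma natDegree_prod_sub_le {p : ℕ} (s : Finset (Fin p)) (c : Fin p → ℂ) :
    (∏ j ∈ s, (X - C (c j))).natDegree ≤ s.card := by
  refine le_trans (Polynomial.natDegree_prod_le s (fun j => X - C (c j))) ?_
  refine le_trans (Finset.sum_le_sum fun j _ => natDegree_X_sub_C_le (c j)) ?_
  simp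

lemma natDegree_prod_one_sub_le {p : ℕ} (s : Finset (Fin p)) (c : Fin p → ℂ) :
    (∏ j ∈ s, (1 - C (c j) * X)).natDegree ≤ s.card := by
  refine le_trans (Polynomial.natDegree_prod_le s (fun j => 1 - C (c j) * X)) ?_
  have h1 : ∀ j : Fin p, (1 - C (c j) * X).natDegree ≤ 1 := by
    intro j
    refine le_trans (natDegree_sub_le _ _) ?_
    simp only [natDegree_one, max_le_iff]
    exact ⟨Nat.zero_le 1, le_trans natDegree_mul_le (by simp)⟩
  refine le_trans (Finset.sum_le_sum fun j _ => h1 j) ?_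
  simp

lemma reflect_prod {p : ℕ} (s : Finset (Fin p)) (c : Fin p → ℂ) :
    Polynomial.reflect s.card (∏ j ∈ s, (X - C (c j))) = ∏ j ∈ s, (1 - C (c j) * X) := by
  classical
  induction s using Finset.induction_on with
  | empty => simp
  | @insert a s ha ih =>
    rw [Finset.prod_insert ha, Finset.prod_insert ha, Finset.card_insert_of_notMem ha]
    rw [show s.card + 1 = 1 + s.card by ring]
    rw [Polynomial.reflect_mul _ _ (natDegree_X_sub_C_le (c a)) (natDegree_prod_sub_le s c)]
    rw [reflect_one_sub, ih]

lemma span_result (p : ℕ) (y : Fin p → ℂ) (hy : Function.Injective y) (R : ℕ → ℂ)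
    (h : ∀ j0 : Fin p, ∑ u ∈ Finset.range p,
        (∏ j ∈ Finset.univ.erase j0, (X - C (y j))).coeff u * R u = 0) :
    ∀ u, u < p → R u = 0 := by
  classical
  intro u0 hu0
  set ψ : ℂ[X] → ℂ := fun P => ∑ u ∈ Finset.range p, P.coeff u * R u with hψ
  have hψC : ∀ (c : ℂ) (P : ℂ[X]), ψ (C c * P) = c * ψ P := by
    intro c P
    simp only [hψ, coeff_C_mul, Finset.mul_sum, mul_assoc]
  have hψbasis : ∀ j0 : Fin p, ψ (Lagrange.basis Finset.univ y j0) = 0 := by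
    intro j0
    have hb : Lagrange.basis Finset.univ y j0
        = C (∏ j ∈ Finset.univ.erase j0, (y j0 - y j)⁻¹)
          * ∏ j ∈ Finset.univ.erase j0, (X - C (y j)) := by
      rw [Lagrange.basis]
      simp only [Lagrange.basisDivisor]
      rw [Finset.prod_mul_distrib, map_prod]
    rw [hb, hψC, show ψ (∏ j ∈ Finset.univ.erase j0, (X - C (y j))) = 0 from h j0, mul_zero]
  have hinj : Set.InjOn y (Finset.univ : Finset (Fin p)) := fun a _ b _ hab => hy hab
  have hdeg : ((X : ℂ[X])^u0).degree < (Finset.univ : Finset (Fin p)).card := by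
    rw [degree_X_pow]
    simp only [Finset.card_univ, Fintype.card_fin]
    exact_mod_cast hu0
  have hX := Lagrange.eq_interpolate (v := y) hinj hdeg
  have hXval : (X : ℂ[X])^u0 = ∑ j : Fin p, C ((y j)^u0) * Lagrange.basis Finset.univ y j := by
    rw [hX, Lagrange.interpolate_apply]
    refine Finset.sum_congr rfl fun j _ => ?_
    simp
  have h1 : ψ ((X : ℂ[X])^u0) = R u0 := by
    rw [show ψ ((X : ℂ[X])^u0) = ∑ u ∈ Finset.range p, (if u = u0 then (1:ℂ) else 0) * R u from by
      simp [hψ, coeff_X_pow]]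
    rw [Finset.sum_eq_single_of_mem u0 (Finset.mem_range.mpr hu0)]
    · simp
    · intro b _ hb; simp [hb]
  have h2 : ψ ((X : ℂ[X])^u0) = 0 := by
    rw [hXval]
    have : ψ (∑ j : Fin p, C ((y j)^u0) * Lagrange.basis Finset.univ y j)
        = ∑ j : Fin p, ψ (C ((y j)^u0) * Lagrange.basis Finset.univ y j) := by
      simp only [hψ, Polynomial.finset_sum_coeff, Finset.sum_mul]
      rw [Finset.sum_comm]
    rw [this]
    refine Finset.sum_eq_zero fun j _ => ?_
    rw [hψC, hψbasis, mul_zero]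
  rw [← h1, h2]

set_option maxHeartbeats 2000000 in
/-- let `r, n > 0`, `n ∤ r`, `k = r/n`, and suppose `x_1, …, x_n` take
distinct values `y_1, …, y_p` with multiplicities `m_1, …, m_p`.  Then `f_i(x) = 0` for
all `i` iff `Res_∞ ∏_j (z-y_j)^{m_j r/n - 1} z^i dz = 0` for `i = 0, …, p-1`. -/
theorem statement14 (r n : ℕ) (hr : 0 < r) (hn : 0 < n) (hnr : ¬ n ∣ r)
    (p : ℕ) (y : Fin p → ℂ) (hy : Function.Injective y) (m : Fin p → ℕ)
    (hm : ∀ j, 0 < m j) (x : Fin n → ℂ) (hx : ∀ i, ∃ j, x i = y j)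
    (hmult : ∀ j, (Finset.univ.filter fun i => x i = y j).card = m j) :
    (∀ i, dunklSingular r n x i = 0)
      ↔ (∀ i : ℕ, i < p → resCondition r n p y m i = 0) := by
  classical
  have hp : 0 < p := by
    obtain ⟨j, _⟩ := hx ⟨0, hn⟩
    exact j.pos
  set g : Fin n → Fin p := fun i => (hx i).choose with hgdef
  have hg : ∀ i, x i = y (g i) := fun i => (hx i).choose_spec
  have hfiber : ∀ j0 : Fin p, (Finset.univ.filter fun i => g i = j0)
      = (Finset.univ.filter fun i => x i = y j0) := by
    intro j0; ext i; simp only [Finset.mem_filter, Finset.mem_univ, true_and]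
    constructor
    · intro hgi; rw [hg i, hgi]
    · intro hxi; exact hy ((hg i).symm.trans hxi)
  set B : PowerSeries ℂ :=
    ∏ j, binSeries ((m j : ℂ) * (r : ℂ) / (n : ℂ) - 1) (y j) with hB
  set Qp : Fin p → Polynomial ℂ :=
    fun j0 => ∏ j ∈ Finset.univ.erase j0, (1 - C (y j) * X) with hQpdef
  have hQpdeg : ∀ j0, (Qp j0).natDegree < p := by
    intro j0
    refine lt_of_le_of_lt (natDegree_prod_one_sub_le _ _) ?_
    rw [Finset.card_erase_of_mem (Finset.mem_univ j0), Finset.card_univ, Fintype.card_fin]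
    omega
  -- grouping the product
  have hprod : (∏ j, binSeries ((r : ℂ) / (n : ℂ)) (x j))
      = B * ∏ j0 : Fin p, binSeries 1 (y j0) := by
    have h1 : (∏ j, binSeries ((r : ℂ) / (n : ℂ)) (x j))
        = ∏ j0 : Fin p, binSeries ((r : ℂ) / (n : ℂ)) (y j0) ^ (m j0) := by
      rw [← Finset.prod_fiberwise_of_maps_to (g := g)
        (fun i _ => Finset.mem_univ (g i)) (fun i => binSeries ((r : ℂ) / (n : ℂ)) (x i))]
      refine Finset.prod_congr rfl fun j0 _ => ?_
      have h2 : ∀ i ∈ Finset.univ.filter (fun i => g i = j0),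
          binSeries ((r : ℂ) / (n : ℂ)) (x i) = binSeries ((r : ℂ) / (n : ℂ)) (y j0) := by
        intro i hi; rw [Finset.mem_filter] at hi; rw [hg i, hi.2]
      rw [Finset.prod_congr rfl h2, Finset.prod_const, hfiber, hmult j0]
    rw [h1, hB, ← Finset.prod_mul_distrib]
    refine Finset.prod_congr rfl fun j0 _ => ?_
    rw [binSeries_pow, binSeries_mul]
    congr 1
    rw [mul_div_assoc]
    ring
  -- the key formula for dunklSingular
  have hdunkl : ∀ i : Fin n, dunklSingular r n x i
      = ∑ t ∈ Finset.range p, (Qp (g i)).coeff t * resCondition r n p y m (p - 1 - t) := by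
    intro i
    have hQcoe : ((Qp (g i) : PowerSeries ℂ))
        = ∏ j ∈ Finset.univ.erase (g i), binSeries 1 (y j) := by
      rw [hQpdef]
      rw [← Polynomial.coeToPowerSeries.ringHom_apply, map_prod]
      refine Finset.prod_congr rfl fun j _ => ?_
      rw [Polynomial.coeToPowerSeries.ringHom_apply]
      rw [binSeries_one]
      push_cast
      rfl
    have hS : invSeries (x i) * ∏ j, binSeries ((r : ℂ) / (n : ℂ)) (x j)
        = ((Qp (g i) : PowerSeries ℂ)) * B := by
      rw [hprod, hg i, invSeries_eq]
      rw [← Finset.mul_prod_erase Finset.univ (fun j0 => binSeries 1 (y j0))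
        (Finset.mem_univ (g i))]
      rw [hQcoe]
      have hcancel : binSeries (-1) (y (g i)) * binSeries 1 (y (g i)) = 1 := by
        rw [binSeries_mul]
        norm_num
        exact binSeries_zero _
      calc binSeries (-1) (y (g i)) * (B * (binSeries 1 (y (g i)) *
              ∏ j ∈ Finset.univ.erase (g i), binSeries 1 (y j)))
          = (binSeries (-1) (y (g i)) * binSeries 1 (y (g i))) *
              ((∏ j ∈ Finset.univ.erase (g i), binSeries 1 (y j)) * B) := by ring
        _ = _ := by rw [hcancel, one_mul]
    unfold dunklSingular
    rw [hS]
    rw [resInf_single_mul ((Qp (g i) : PowerSeries ℂ) * B) ((r : ℤ) - 1)]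
    rw [show (1 : ℤ) + ((r : ℤ) - 1) = (r : ℤ) by ring]
    rw [coe_poly_mul_lcoeff (Qp (g i)) p (hQpdeg (g i)) B (r : ℤ)]
    rw [neg_eq_iff_eq_neg, ← Finset.sum_neg_distrib]
    refine Finset.sum_congr rfl fun t ht => ?_
    rw [Finset.mem_range] at ht
    unfold resCondition
    rw [resInf_single_mul B ((r : ℤ) - (p : ℤ) + ((p - 1 - t : ℕ) : ℤ))]
    have hcast : ((p - 1 - t : ℕ) : ℤ) = (p : ℤ) - 1 - (t : ℤ) := by omega
    rw [hcast]
    rw [show (1 : ℤ) + ((r : ℤ) - (p : ℤ) + ((p : ℤ) - 1 - (t : ℤ))) = (r : ℤ) - (t : ℤ) by ring]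
    ring
  constructor
  · -- forward direction
    intro hd
    refine span_result p y hy (fun u => resCondition r n p y m u) ?_
    intro j0
    have hne : (Finset.univ.filter fun i => x i = y j0).Nonempty := by
      rw [← Finset.card_pos, hmult j0]; exact hm j0
    obtain ⟨i, hi⟩ := hne
    rw [Finset.mem_filter] at hi
    have hgi : g i = j0 := hy ((hg i).symm.trans hi.2)
    have hzero := (hdunkl i).symm.trans (hd i)
    rw [hgi] at hzero
    -- hzero : ∑ t ∈ range p, (Qp j0).coeff t * resCondition ... (p - 1 - t) = 0
    have hrefl : ∀ t, t < p → (Qp j0).coeff t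
        = (∏ j ∈ Finset.univ.erase j0, (X - C (y j))).coeff (p - 1 - t) := by
      intro t ht
      have hcard : (Finset.univ.erase j0).card = p - 1 := by
        rw [Finset.card_erase_of_mem (Finset.mem_univ j0), Finset.card_univ, Fintype.card_fin]
      have := reflect_prod (Finset.univ.erase j0) y
      rw [hcard] at this
      rw [hQpdef]
      simp only
      rw [← this, coeff_reflect, revAt_le (show t ≤ p - 1 by omega)]
    calc ∑ u ∈ Finset.range p,
          (∏ j ∈ Finset.univ.erase j0, (X - C (y j))).coeff u * resCondition r n p y m u
        = ∑ t ∈ Finset.range p, (∏ j ∈ Finset.univ.erase j0, (X - C (y j))).coeff (p - 1 - t) *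
            resCondition r n p y m (p - 1 - t) := by
          exact (Finset.sum_range_reflect (fun u =>
            (∏ j ∈ Finset.univ.erase j0, (X - C (y j))).coeff u *
              resCondition r n p y m u) p).symm
      _ = ∑ t ∈ Finset.range p, (Qp j0).coeff t * resCondition r n p y m (p - 1 - t) := by
          refine Finset.sum_congr rfl fun t ht => ?_
          rw [Finset.mem_range] at ht
          rw [hrefl t ht]
      _ = 0 := hzero
  · -- backward direction
    intro hres i
    rw [hdunkl i]
    refine Finset.sum_eq_zero fun t ht => ?_
    rw [Finset.mem_range] at ht
    rw [hres (p - 1 - t) (by omega)]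
    ring
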